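/- Let E be a finite-dimensional real normed vector space and let g : E → E be a C¹ map for which there exists β > 0 such that ‖Dg(x)v‖ ≥ β‖v‖ for every x ∈ E and every v ∈ E. Then g is a bijection of E onto E, g is a C¹ diffeomorphism (its inverse is differentiable with D(g⁻¹)(y) = (Dg(g⁻¹(y)))⁻¹), and the inverse g⁻¹ is Lipschitz with Lipschitz constant 1/β. -/

import Mathlib

/-!
Lower bounds on the derivative make `g` a local diffeomorphism whose local inverses all have
derivative of norm at most `1/β`. Hence every lift through `g` of a segment `t ↦ g x + t • w`
is `‖w‖/β`-Lipschitz, so it stays in a compact ball and can be continued over all of `[0, 1]`.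
Lifting the straight-line homotopy from `g x` to every `y` at once gives a continuous right
inverse `ψ` of `g` with `ψ (g x) = x`; uniqueness of lifts through the separated local
homeomorphism `g` on the connected space `E` then forces `ψ ∘ g = id`. The inverse is
differentiable by the inverse function theorem, and `1/β`-Lipschitz because `g⁻¹` itself lifts
segments.
-/

open Set Filter Topology

theorem ContinuousLinearMap.exists_equiv_of_mul_norm_le {E : Type*} [NormedAddCommGroup E]
    [NormedSpace ℝ E] [FiniteDimensional ℝ E] {f : E →L[ℝ] E} {β : ℝ} (hβ : 0 < β)
    (hf : ∀ v, β * ‖v‖ ≤ ‖f v‖) :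
    ∃ A : E ≃L[ℝ] E, (A : E →L[ℝ] E) = f ∧ ∀ w, ‖A.symm w‖ ≤ β⁻¹ * ‖w‖ := by
  have hinj : Function.Injective f := by
    refine (injective_iff_map_eq_zero f).2 fun v hv => norm_le_zero_iff.1 ?_
    nlinarith [hf v, norm_nonneg v, hv ▸ norm_zero (E := E)]
  let A := (LinearEquiv.ofInjectiveEndo (f : E →ₗ[ℝ] E) hinj).toContinuousLinearEquiv
  have hA : (A : E →L[ℝ] E) = f := by ext; rfl
  refine ⟨A, hA, fun w => ?_⟩
  rw [inv_mul_eq_div, le_div_iff₀' hβ]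
  simpa [← hA] using hf (A.symm w)

theorem exists_lift_Icc_extend {X Y : Type*} [TopologicalSpace X] [TopologicalSpace Y]
    {g : X → Y} {p : ℝ → Y} (hp : Continuous p) {γ : ℝ → X} {t t' : ℝ} (ht : 0 ≤ t)
    (htt' : t ≤ t') (hγ : ContinuousOn γ (Icc 0 t)) (hγp : EqOn (g ∘ γ) p (Icc 0 t))
    (Φ : OpenPartialHomeomorph X Y) (hΦ : ⇑Φ = g) (hsource : γ t ∈ Φ.source)
    (htarget : MapsTo p (Icc t t') Φ.target) :
    ∃ γ' : ℝ → X, γ' 0 = γ 0 ∧ ContinuousOn γ' (Icc 0 t') ∧ EqOn (g ∘ γ') p (Icc 0 t') := by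
  subst hΦ
  have hjoin : γ t = Φ.symm (p t) := by
    rw [← hγp (right_mem_Icc.2 ht), Function.comp_apply, Φ.left_inv hsource]
  let γ' : ℝ → X := fun s => if s ≤ t then γ s else Φ.symm (p s)
  have hleft : EqOn γ' γ (Icc 0 t) := fun s hs => if_pos hs.2
  have hright : EqOn γ' (Φ.symm ∘ p) (Icc t t') := fun s hs => by
    rcases hs.1.eq_or_lt with rfl | hlt
    · exact (if_pos le_rfl).trans hjoin
    · exact if_neg hlt.not_ge
  refine ⟨γ', if_pos ht, ?_, ?_⟩ <;> rw [← Icc_union_Icc_eq_Icc ht htt']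
  · exact (hγ.congr hleft).union_of_isClosed
      ((Φ.continuousOn_symm.comp hp.continuousOn htarget).congr hright) isClosed_Icc isClosed_Icc
  · rintro s (hs | hs)
    · simp only [Function.comp_apply, hleft hs]; exact hγp hs
    · simp only [Function.comp_apply, hright hs]; exact Φ.right_inv (htarget hs)

section HadamardLevy

variable {E : Type*} [NormedAddCommGroup E] [NormedSpace ℝ E] {g : E → E}
  {A : E → E ≃L[ℝ] E} {C : ℝ}

section CompleteSpace

variable [CompleteSpace E]

theorem isLocalHomeomorph_of_hasStrictFDerivAt_equiv
    (hA : ∀ x, HasStrictFDerivAt g (A x : E →L[ℝ] E) x) : IsLocalHomeomorph g := fun x =>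
  ⟨(hA x).toOpenPartialHomeomorph g, (hA x).mem_toOpenPartialHomeomorph_source,
    (hA x).toOpenPartialHomeomorph_coe.symm⟩

theorem hasDerivWithinAt_lift (hA : ∀ x, HasStrictFDerivAt g (A x : E →L[ℝ] E) x)
    {s : Set ℝ} {γ p : ℝ → E} {p' : E} {t : ℝ} (ht : t ∈ s) (hγ : ContinuousWithinAt γ s t)
    (hγp : EqOn (g ∘ γ) p s) (hp : HasDerivWithinAt p p' s t) :
    HasDerivWithinAt γ ((A (γ t)).symm p') s t := by
  have hinv := (hA (γ t)).to_localInverse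
  rw [show g (γ t) = p t from hγp ht] at hinv
  have hev : γ =ᶠ[𝓝[s] t] (hA (γ t)).localInverse g _ _ ∘ p := by
    filter_upwards [hγ.tendsto.eventually (hA (γ t)).eventually_left_inverse,
      self_mem_nhdsWithin] with t' hleft ht'
    rw [Function.comp_apply, ← hγp ht', Function.comp_apply, hleft]
  exact (hinv.hasFDerivAt.comp_hasDerivWithinAt t hp).congr_of_eventuallyEq hev
    (hev.self_of_nhdsWithin ht)

theorem norm_lift_sub_le (hA : ∀ x, HasStrictFDerivAt g (A x : E →L[ℝ] E) x)
    (hC : ∀ x w, ‖(A x).symm w‖ ≤ C * ‖w‖) {s : Set ℝ} (hs : Convex ℝ s) {γ : ℝ → E}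
    {c w : E} (hγ : ContinuousOn γ s) (hγp : EqOn (g ∘ γ) (fun t => c + t • w) s)
    {t₁ t₂ : ℝ} (h₁ : t₁ ∈ s) (h₂ : t₂ ∈ s) : ‖γ t₁ - γ t₂‖ ≤ C * ‖w‖ * ‖t₁ - t₂‖ := by
  have hp (t : ℝ) : HasDerivAt (fun t : ℝ => c + t • w) w t := by
    simpa using ((hasDerivAt_id t).smul_const w).const_add c
  exact hs.norm_image_sub_le_of_norm_hasDerivWithin_le
    (fun t ht => hasDerivWithinAt_lift hA ht (hγ t ht) hγp (hp t).hasDerivWithinAt)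
    (fun t _ => hC _ w) h₂ h₁

theorem lift_segment_mem_closedBall (hA : ∀ x, HasStrictFDerivAt g (A x : E →L[ℝ] E) x)
    (hC : ∀ x w, ‖(A x).symm w‖ ≤ C * ‖w‖) {γ : ℝ → E} {c w : E} {t : ℝ} (ht : t ∈ Icc 0 1)
    (hγ : ContinuousOn γ (Icc 0 t)) (hγp : EqOn (g ∘ γ) (fun s => c + s • w) (Icc 0 t)) :
    γ t ∈ Metric.closedBall (γ 0) (C * ‖w‖) := by
  have := norm_lift_sub_le hA hC (convex_Icc 0 t) hγ hγp (right_mem_Icc.2 ht.1)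
    (left_mem_Icc.2 ht.1)
  rw [sub_zero, Real.norm_of_nonneg ht.1] at this
  rw [mem_closedBall_iff_norm]
  nlinarith [ht.2, (norm_nonneg _).trans (hC c w)]

theorem dist_homeomorph_symm_le (hA : ∀ x, HasStrictFDerivAt g (A x : E →L[ℝ] E) x)
    (hC : ∀ x w, ‖(A x).symm w‖ ≤ C * ‖w‖) (e : E ≃ₜ E) (he : ⇑e = g) (y₁ y₂ : E) :
    dist (e.symm y₁) (e.symm y₂) ≤ C * dist y₁ y₂ := by
  subst he
  have := norm_lift_sub_le hA hC convex_univ (γ := fun t : ℝ => e.symm (y₂ + t • (y₁ - y₂)))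
    (by fun_prop) (fun t _ => e.apply_symm_apply _) (mem_univ 1) (mem_univ 0)
  simpa [dist_eq_norm] using this

end CompleteSpace

section FiniteDimensional

variable [FiniteDimensional ℝ E]

theorem exists_lift_segment
    (hA : ∀ x, HasStrictFDerivAt g (A x : E →L[ℝ] E) x) (hC : ∀ x w, ‖(A x).symm w‖ ≤ C * ‖w‖)
    (x w : E) : ∃ γ : ℝ → E, γ 0 = x ∧ ContinuousOn γ (Icc 0 1) ∧
      EqOn (g ∘ γ) (fun t => g x + t • w) (Icc 0 1) := by
  set p : ℝ → E := fun t => g x + t • w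
  have hp : Continuous p := by fun_prop
  set S := {t ∈ Icc (0 : ℝ) 1 | ∃ γ : ℝ → E, γ 0 = x ∧ ContinuousOn γ (Icc 0 t) ∧
    EqOn (g ∘ γ) p (Icc 0 t)}
  suffices h1 : 1 ∈ S from h1.2
  have h0 : (0 : ℝ) ∈ S := ⟨left_mem_Icc.2 zero_le_one, fun _ => x, rfl, continuousOn_const,
    fun t ht => by simp [p, le_antisymm ht.2 ht.1]⟩
  have hbdd : BddAbove S := ⟨1, fun t ht => ht.1.2⟩
  set T := sSup S
  obtain ⟨u, -, hu, huS⟩ := exists_seq_tendsto_sSup ⟨0, h0⟩ hbdd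
  choose γ hγ0 hγc hγp using fun n => (huS n).2
  -- the partial lifts end in a compact ball, so their endpoints accumulate at some `z` over
  -- `p T`; the local inverse of `g` at `z` then continues one of them past `T`, unless `T = 1`
  have hball (n : ℕ) : γ n (u n) ∈ Metric.closedBall x (C * ‖w‖) :=
    hγ0 n ▸ lift_segment_mem_closedBall hA hC (huS n).1 (hγc n) (hγp n)
  obtain ⟨z, -, φ, hφ, hz⟩ := (isCompact_closedBall x _).tendsto_subseq hball
  have huφ : Tendsto (u ∘ φ) atTop (𝓝 T) := hu.comp hφ.tendsto_atTop
  have hgz : g z = p T := by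
    refine tendsto_nhds_unique (((hA z).continuousAt.tendsto).comp hz) ?_
    refine (hp.tendsto T |>.comp huφ).congr fun n => ?_
    exact (hγp (φ n) (right_mem_Icc.2 (huS (φ n)).1.1)).symm
  set Φ := (hA z).toOpenPartialHomeomorph g
  obtain ⟨δ, hδ, hδp⟩ : ∃ δ > 0, ∀ s, dist s T < δ → p s ∈ Φ.target :=
    Metric.eventually_nhds_iff.1 <| hp.continuousAt.preimage_mem_nhds <|
      Φ.open_target.mem_nhds (hgz ▸ (hA z).image_mem_toOpenPartialHomeomorph_target)
  obtain ⟨n, hn_source, hn_close⟩ : ∃ n, γ (φ n) (u (φ n)) ∈ Φ.source ∧ T - δ < u (φ n) :=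
    ((hz.eventually (Φ.open_source.mem_nhds (hA z).mem_toOpenPartialHomeomorph_source)).and
      (huφ.eventually (lt_mem_nhds (sub_lt_self T hδ)))).exists
  have huT : u (φ n) ≤ T := le_csSup hbdd (huS (φ n))
  set t' := min (T + δ / 2) 1
  have ht' : t' ∈ S := by
    obtain ⟨γ', hγ'0, hγ'c, hγ'p⟩ := exists_lift_Icc_extend (t' := t') hp (huS (φ n)).1.1
      (le_min (by linarith) (huS (φ n)).1.2) (hγc (φ n)) (hγp (φ n)) Φ
      (hA z).toOpenPartialHomeomorph_coe hn_source fun s hs => hδp s <| by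
        rw [Real.dist_eq, abs_lt]
        constructor <;> linarith [hs.1, hs.2.trans (min_le_left _ _)]
    exact ⟨⟨le_trans (huS (φ n)).1.1 (le_min (by linarith) (huS (φ n)).1.2), min_le_right _ _⟩,
      γ', hγ'0.trans (hγ0 _), hγ'c, hγ'p⟩
  rcases min_choice (T + δ / 2) 1 with h | h
  · linarith [le_csSup hbdd ht', show t' = T + δ / 2 from h]
  · rwa [show t' = 1 from h] at ht'

theorem exists_continuous_rightInverse_of_hasStrictFDerivAt_equiv
    (hA : ∀ x, HasStrictFDerivAt g (A x : E →L[ℝ] E) x) (hC : ∀ x w, ‖(A x).symm w‖ ≤ C * ‖w‖)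
    (x : E) : ∃ ψ : E → E, Continuous ψ ∧ Function.RightInverse ψ g ∧ ψ (g x) = x := by
  choose γ hγ0 hγc hγp using fun y => exists_lift_segment hA hC x (y - g x)
  have hg := isLocalHomeomorph_of_hasStrictFDerivAt_equiv hA
  -- lifting the straight-line homotopy from `g x` to `y`, jointly in `(t, y)`
  have hF : Continuous fun q : unitInterval × E => γ q.2 q.1 :=
    hg.continuous_lift (T2Space.isSeparatedMap g)
      ⟨fun q => g x + (q.1 : ℝ) • (q.2 - g x), by fun_prop⟩ (funext fun q => hγp q.2 q.1.2)
      (by simpa [hγ0] using continuous_const)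
      fun y => (hγc y).comp_continuous continuous_subtype_val Subtype.prop
  refine ⟨fun y => γ y 1, hF.comp (by fun_prop : Continuous fun y : E => ((1 : unitInterval), y)),
    fun y => by simpa using hγp y (right_mem_Icc.2 zero_le_one), ?_⟩
  have hconst : EqOn (γ (g x)) (fun _ => x) (Icc 0 1) :=
    (T2Space.isSeparatedMap g).eqOn_of_comp_eqOn hg.isLocallyInjective isPreconnected_Icc
      (hγc (g x)) continuousOn_const (fun t ht => by simpa using hγp (g x) ht)
      (left_mem_Icc.2 zero_le_one) (hγ0 _)
  exact hconst (right_mem_Icc.2 zero_le_one)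

theorem exists_homeomorph_of_hasStrictFDerivAt_equiv
    (hA : ∀ x, HasStrictFDerivAt g (A x : E →L[ℝ] E) x) (hC : ∀ x w, ‖(A x).symm w‖ ≤ C * ‖w‖) :
    ∃ e : E ≃ₜ E, ⇑e = g := by
  have hg := isLocalHomeomorph_of_hasStrictFDerivAt_equiv hA
  obtain ⟨ψ, hψ, hright, hψ0⟩ := exists_continuous_rightInverse_of_hasStrictFDerivAt_equiv hA hC 0
  -- `ψ ∘ g` and `id` are lifts of `g` through `g` that agree at `0`
  have hleft : ψ ∘ g = id :=
    (T2Space.isSeparatedMap g).eq_of_comp_eq hg.isLocallyInjective (hψ.comp hg.continuous)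
      continuous_id (funext fun y => hright (g y)) 0 hψ0
  exact ⟨⟨⟨g, ψ, congrFun hleft, hright⟩, hg.continuous, hψ⟩, rfl⟩

end FiniteDimensional

theorem hasFDerivAt_homeomorph_symm (hA : ∀ x, HasStrictFDerivAt g (A x : E →L[ℝ] E) x)
    (e : E ≃ₜ E) (he : ⇑e = g) (y : E) :
    HasFDerivAt e.symm ((A (e.symm y)).symm : E →L[ℝ] E) y := by
  subst he
  exact (hA _).hasFDerivAt.of_local_left_inverse e.symm.continuous.continuousAt
    (Eventually.of_forall e.apply_symm_apply)

end HadamardLevy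

/-- Claim 1 (analytic core): a `C¹` self-map of a finite-dimensional real
normed space whose derivative is uniformly bounded below is a bijection, a
`C¹` diffeomorphism (the inverse is differentiable with derivative the inverse
of the derivative of `g`), and its inverse is Lipschitz with constant `1/β`. -/
theorem uniform_lower_bound_derivative_diffeo
    {E : Type*} [NormedAddCommGroup E] [NormedSpace ℝ E] [FiniteDimensional ℝ E]
    (g : E → E) (hg : ContDiff ℝ 1 g)
    (β : ℝ) (hβ : 0 < β)
    (hlow : ∀ x : E, ∀ v : E, β * ‖v‖ ≤ ‖fderiv ℝ g x v‖) :
    Function.Bijective g ∧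
      ∃ ginv : E → E,
        Function.LeftInverse ginv g ∧ Function.RightInverse ginv g ∧
        (∀ y : E, DifferentiableAt ℝ ginv y ∧
          fderiv ℝ ginv y = (fderiv ℝ g (ginv y)).inverse) ∧
        (∀ y₁ y₂ : E, dist (ginv y₁) (ginv y₂) ≤ (1 / β) * dist y₁ y₂) := by
  choose A hAg hAC using fun x => (fderiv ℝ g x).exists_equiv_of_mul_norm_le hβ (hlow x)
  have hA (x : E) : HasStrictFDerivAt g (A x : E →L[ℝ] E) x :=
    hAg x ▸ hg.contDiffAt.hasStrictFDerivAt one_ne_zero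
  obtain ⟨e, he⟩ := exists_homeomorph_of_hasStrictFDerivAt_equiv hA hAC
  subst he
  refine ⟨e.bijective, e.symm, e.symm_apply_apply, e.apply_symm_apply, fun y => ?_,
    by simpa using dist_homeomorph_symm_le hA hAC e rfl⟩
  have hderiv := hasFDerivAt_homeomorph_symm hA e rfl y
  exact ⟨hderiv.differentiableAt, by rw [hderiv.fderiv, ← hAg, ContinuousLinearMap.inverse_equiv]⟩
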